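/- If a finite simple graph G has an SOCDC, then for every integer n ≥ 2|V(G)| + 1 the Cartesian product G □ C_n has an SOCDC. -/

import Mathlib

open SimpleGraph

/-- The list of arcs of a cyclically-read list of vertices:
`[(l₀,l₁), (l₁,l₂), …, (lₙ₋₁,l₀)]`. -/
def cycleArcs {V : Type*} (l : List V) : List (V × V) := l.zip (l.rotate 1)

/-- `l` represents a directed cycle of the symmetric orientation of `G`:
a cyclic sequence of at least three pairwise distinct vertices with consecutive
vertices adjacent (cyclically). -/
def IsDirCycle {V : Type*} (G : SimpleGraph V) (l : List V) : Prop :=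
  3 ≤ l.length ∧ l.Nodup ∧ ∀ p ∈ cycleArcs l, G.Adj p.1 p.2

/-- An oriented cycle double cover of `G` : a collection of directed cycles of the
symmetric orientation of `G` such that each arc `(u,v)` (with `u ~ v` in `G`) lies
in exactly one of the cycles. -/
def IsOCDC {V : Type*} (G : SimpleGraph V) (C : Finset (List V)) : Prop :=
  (∀ l ∈ C, IsDirCycle G l) ∧
    ∀ u v : V, G.Adj u v → ∃! l : List V, l ∈ C ∧ (u, v) ∈ cycleArcs l

/-- `G` (a graph with vertex set of size `n`) has a small oriented cycle double cover:
an OCDC with at most `n - 1` directed cycles. -/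
def HasSOCDC {V : Type*} (G : SimpleGraph V) : Prop :=
  ∃ C : Finset (List V), IsOCDC G C ∧ C.card ≤ Nat.card V - 1

/-- `l` represents a directed path of the symmetric orientation of `G`. -/
def IsDirPath {V : Type*} (G : SimpleGraph V) (l : List V) : Prop :=
  l ≠ [] ∧ l.Nodup ∧ l.Chain' G.Adj

/-- An oriented perfect path double cover of `G`: a collection of directed paths of the
symmetric orientation of `G` such that each arc lies in exactly one path, and every
vertex occurs exactly once as the start and exactly once as the end of a path. -/
def IsOPPDC {V : Type*} (G : SimpleGraph V) (P : Finset (List V)) : Prop :=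
  (∀ l ∈ P, IsDirPath G l) ∧
    (∀ u v : V, G.Adj u v → ∃! l : List V, l ∈ P ∧ (u, v) ∈ l.zip l.tail) ∧
    (∀ v : V, ∃! l : List V, l ∈ P ∧ l.head? = some v) ∧
    (∀ v : V, ∃! l : List V, l ∈ P ∧ l.getLast? = some v)

/-! Copy each cycle of a small cover of `G` into each of the `n` layers `G × {j}`, and add every
fibre `{v} × Cₙ` in both directions. A horizontal arc lies in the copy of the unique cycle of `G`
through it, a vertical one in exactly one orientation of its fibre. This uses at most
`(|V| - 1) n + 2 |V|` cycles, which is `≤ |V| n - 1` as soon as `n ≥ 2 |V| + 1`. -/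

lemma cycleArcs_map {V W : Type*} (f : V → W) (l : List V) :
    cycleArcs (l.map f) = (cycleArcs l).map (Prod.map f f) := by
  rw [cycleArcs, cycleArcs, ← List.map_rotate, List.zip_map]

lemma cycleArcs_finRange (n : ℕ) [NeZero n] :
    cycleArcs (List.finRange n) = (List.finRange n).map fun i => (i, i + 1) := by
  refine List.ext_getElem (by simp [cycleArcs]) fun k _ _ => ?_
  simp only [cycleArcs, List.getElem_zip, List.getElem_rotate, List.getElem_map,
    List.getElem_finRange, List.length_finRange]
  ext <;> simp [Fin.val_add, Nat.add_mod]

lemma mem_cycleArcs_map_finRange {W : Type*} {n : ℕ} [NeZero n] (f : Fin n → W) (p : W × W) :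
    p ∈ cycleArcs ((List.finRange n).map f) ↔ ∃ i, p = (f i, f (i + 1)) := by
  simp [cycleArcs_map, cycleArcs_finRange, eq_comm]

lemma Fin.add_one_ne_sub_one {n : ℕ} (i : Fin (n + 3)) : i + 1 ≠ i - 1 := by
  intro h
  have := congrArg Fin.val (add_left_cancel (h.trans (sub_eq_add_neg i 1)))
  simp [Fin.val_neg] at this

section CycleGraph

variable {n : ℕ}

lemma cycleGraph_adj_add_one (i : Fin (n + 2)) : (cycleGraph (n + 2)).Adj i (i + 1) :=
  Or.inr (add_sub_cancel_left i 1)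

lemma cycleGraph_adj_sub_one (i : Fin (n + 2)) : (cycleGraph (n + 2)).Adj i (i - 1) :=
  Or.inl (sub_sub_cancel i 1)

lemma eq_add_one_or_eq_sub_one_of_cycleGraph_adj {i j : Fin (n + 2)}
    (h : (cycleGraph (n + 2)).Adj i j) : j = i + 1 ∨ j = i - 1 := by
  rw [cycleGraph_adj, sub_eq_iff_eq_add, sub_eq_iff_eq_add'] at h
  exact h.symm.imp_right fun h => eq_sub_of_add_eq' h.symm

end CycleGraph

section Prism

variable {V : Type*} {n : ℕ}

def layerCycle {W : Type*} (l : List V) (j : W) : List (V × W) := l.map (·, j)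

def fiberCycle (v : V) (n : ℕ) : List (V × Fin n) := (List.finRange n).map (v, ·)

def fiberCycleRev (v : V) (n : ℕ) : List (V × Fin n) := (List.finRange n).map fun i => (v, -i)

lemma mk_mem_cycleArcs_layerCycle {W : Type*} {l : List V} {k : W} {a b : V} {i j : W} :
    ((a, i), (b, j)) ∈ cycleArcs (layerCycle l k) ↔ (a, b) ∈ cycleArcs l ∧ i = k ∧ j = k := by
  simp only [layerCycle, cycleArcs_map, List.mem_map]
  grind

lemma mk_mem_cycleArcs_fiberCycle [NeZero n] {v a b : V} {i j : Fin n} :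
    ((a, i), (b, j)) ∈ cycleArcs (fiberCycle v n) ↔ a = v ∧ b = v ∧ j = i + 1 := by
  simp [fiberCycle, mem_cycleArcs_map_finRange]

lemma mk_mem_cycleArcs_fiberCycleRev [NeZero n] {v a b : V} {i j : Fin n} :
    ((a, i), (b, j)) ∈ cycleArcs (fiberCycleRev v n) ↔ a = v ∧ b = v ∧ j = i - 1 := by
  simp only [fiberCycleRev, mem_cycleArcs_map_finRange, Prod.mk.injEq]
  constructor
  · rintro ⟨i, ⟨rfl, rfl⟩, rfl, rfl⟩
    exact ⟨rfl, rfl, by abel⟩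
  · rintro ⟨rfl, rfl, rfl⟩
    exact ⟨-i, ⟨rfl, (neg_neg i).symm⟩, rfl, by abel⟩

lemma IsDirCycle.layerCycle {G : SimpleGraph V} {l : List V} (hl : IsDirCycle G l) {W : Type*}
    (H : SimpleGraph W) (j : W) : IsDirCycle (G □ H) (layerCycle l j) := by
  refine ⟨by simpa [_root_.layerCycle] using hl.1, hl.2.1.map (Prod.mk_left_injective j), ?_⟩
  rintro ⟨⟨a, i⟩, ⟨b, k⟩⟩ hp
  obtain ⟨hab, rfl, rfl⟩ := mk_mem_cycleArcs_layerCycle.1 hp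
  exact Or.inl ⟨hl.2.2 _ hab, rfl⟩

lemma isDirCycle_fiberCycle (G : SimpleGraph V) (v : V) :
    IsDirCycle (G □ cycleGraph (n + 3)) (fiberCycle v (n + 3)) := by
  refine ⟨by simp [fiberCycle], (List.nodup_finRange _).map (Prod.mk_right_injective v), ?_⟩
  rintro ⟨⟨a, i⟩, ⟨b, j⟩⟩ hp
  obtain ⟨rfl, rfl, rfl⟩ := mk_mem_cycleArcs_fiberCycle.1 hp
  exact Or.inr ⟨cycleGraph_adj_add_one i, rfl⟩

lemma isDirCycle_fiberCycleRev (G : SimpleGraph V) (v : V) :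
    IsDirCycle (G □ cycleGraph (n + 3)) (fiberCycleRev v (n + 3)) := by
  refine ⟨by simp [fiberCycleRev],
    (List.nodup_finRange _).map ((Prod.mk_right_injective v).comp neg_injective), ?_⟩
  rintro ⟨⟨a, i⟩, ⟨b, j⟩⟩ hp
  obtain ⟨rfl, rfl, rfl⟩ := mk_mem_cycleArcs_fiberCycleRev.1 hp
  exact Or.inr ⟨cycleGraph_adj_sub_one i, rfl⟩

end Prism

section PrismCover

variable {V : Type*} [Fintype V] [DecidableEq V] {G : SimpleGraph V} {n : ℕ}

def prismCover (C : Finset (List V)) (n : ℕ) : Finset (List (V × Fin n)) :=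
  (C ×ˢ Finset.univ).image (fun q => layerCycle q.1 q.2) ∪
    (Finset.univ.image (fiberCycle · n) ∪ Finset.univ.image (fiberCycleRev · n))

lemma mem_prismCover {C : Finset (List V)} {l : List (V × Fin n)} :
    l ∈ prismCover C n ↔ (∃ l₀ ∈ C, ∃ j, layerCycle l₀ j = l) ∨
      (∃ v, fiberCycle v n = l) ∨ ∃ v, fiberCycleRev v n = l := by
  simp [prismCover]

lemma card_prismCover_le (C : Finset (List V)) (n : ℕ) :
    (prismCover C n).card ≤ C.card * n + 2 * Fintype.card V := by
  calc (prismCover C n).card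
      ≤ (C ×ˢ Finset.univ).card + (Finset.univ.card + Finset.univ.card) :=
        (Finset.card_union_le _ _).trans <| add_le_add Finset.card_image_le <|
          (Finset.card_union_le _ _).trans <| add_le_add Finset.card_image_le Finset.card_image_le
    _ = C.card * n + 2 * Fintype.card V := by simp [two_mul]

lemma isDirCycle_of_mem_prismCover {C : Finset (List V)} (hC : ∀ l ∈ C, IsDirCycle G l)
    {l : List (V × Fin (n + 3))} (hl : l ∈ prismCover C (n + 3)) :
    IsDirCycle (G □ cycleGraph (n + 3)) l := by
  obtain ⟨l₀, hl₀, j, rfl⟩ | ⟨v, rfl⟩ | ⟨v, rfl⟩ := mem_prismCover.1 hl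
  · exact (hC l₀ hl₀).layerCycle _ j
  · exact isDirCycle_fiberCycle G v
  · exact isDirCycle_fiberCycleRev G v

lemma exists_mem_prismCover_of_adj {C : Finset (List V)} (hC : IsOCDC G C)
    {a b : V} {i j : Fin (n + 3)} (h : (G □ cycleGraph (n + 3)).Adj (a, i) (b, j)) :
    ∃ l ∈ prismCover C (n + 3), ((a, i), (b, j)) ∈ cycleArcs l := by
  rcases h with ⟨hab, rfl⟩ | ⟨hij, rfl⟩
  · obtain ⟨l₀, ⟨hl₀, hab⟩, -⟩ := hC.2 a b hab
    exact ⟨layerCycle l₀ i, mem_prismCover.2 (Or.inl ⟨l₀, hl₀, i, rfl⟩),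
      mk_mem_cycleArcs_layerCycle.2 ⟨hab, rfl, rfl⟩⟩
  · rcases eq_add_one_or_eq_sub_one_of_cycleGraph_adj hij with rfl | rfl
    · exact ⟨fiberCycle a _, mem_prismCover.2 (Or.inr (Or.inl ⟨a, rfl⟩)),
        mk_mem_cycleArcs_fiberCycle.2 ⟨rfl, rfl, rfl⟩⟩
    · exact ⟨fiberCycleRev a _, mem_prismCover.2 (Or.inr (Or.inr ⟨a, rfl⟩)),
        mk_mem_cycleArcs_fiberCycleRev.2 ⟨rfl, rfl, rfl⟩⟩

lemma eq_of_mem_cycleArcs_prismCover {C : Finset (List V)} (hC : IsOCDC G C)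
    {l₁ l₂ : List (V × Fin (n + 3))} (h₁ : l₁ ∈ prismCover C (n + 3))
    (h₂ : l₂ ∈ prismCover C (n + 3)) {a b : V} {i j : Fin (n + 3)}
    (hp₁ : ((a, i), (b, j)) ∈ cycleArcs l₁) (hp₂ : ((a, i), (b, j)) ∈ cycleArcs l₂) :
    l₁ = l₂ := by
  have hsucc : i + 1 ≠ i := by simp
  have hpred : i - 1 ≠ i := by simp
  have hsucc_pred := Fin.add_one_ne_sub_one i
  -- Arcs of layers, forward fibres and backward fibres are told apart by `j - i ∈ {0, 1, -1}`.
  obtain ⟨l₀, hl₀, k, rfl⟩ | ⟨v, rfl⟩ | ⟨v, rfl⟩ := mem_prismCover.1 h₁ <;>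
  obtain ⟨l₀', hl₀', k', rfl⟩ | ⟨v', rfl⟩ | ⟨v', rfl⟩ := mem_prismCover.1 h₂ <;>
  simp only [mk_mem_cycleArcs_layerCycle, mk_mem_cycleArcs_fiberCycle,
    mk_mem_cycleArcs_fiberCycleRev] at hp₁ hp₂
  · obtain ⟨hab, rfl, rfl⟩ := hp₁
    obtain ⟨hab', rfl, -⟩ := hp₂
    rw [(hC.2 a b ((hC.1 l₀ hl₀).2.2 _ hab)).unique ⟨hl₀, hab⟩ ⟨hl₀', hab'⟩]
  all_goals grind

theorem IsOCDC.prismCover {C : Finset (List V)} (hC : IsOCDC G C) :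
    IsOCDC (G □ cycleGraph (n + 3)) (prismCover C (n + 3)) := by
  refine ⟨fun l hl => isDirCycle_of_mem_prismCover hC.1 hl, fun ⟨a, i⟩ ⟨b, j⟩ h => ?_⟩
  obtain ⟨l, hl, harc⟩ := exists_mem_prismCover_of_adj hC h
  exact ⟨l, ⟨hl, harc⟩, fun l' ⟨hl', harc'⟩ => eq_of_mem_cycleArcs_prismCover hC hl' hl harc' harc⟩

end PrismCover

/-- If `G` has an SOCDC, then for every `n ≥ 2|V(G)| + 1` the Cartesian product
`G □ Cₙ` has an SOCDC. -/
theorem hasSOCDC_boxProd_long_cycle {V : Type} [Finite V] (G : SimpleGraph V)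
    (hG : HasSOCDC G) :
    ∀ n : ℕ, 2 * Nat.card V + 1 ≤ n → HasSOCDC (G □ cycleGraph n) := by
  intro n hn
  classical
  have := Fintype.ofFinite V
  rcases isEmpty_or_nonempty V with hempty | hnonempty
  · exact ⟨∅, ⟨by simp, fun u => isEmptyElim u⟩, by simp⟩
  obtain ⟨C, hC, hcard⟩ := hG
  have hV : 0 < Nat.card V := Nat.card_pos
  obtain ⟨n, rfl⟩ : ∃ k, n = k + 3 := ⟨n - 3, by omega⟩
  refine ⟨prismCover C (n + 3), hC.prismCover, (card_prismCover_le C _).trans ?_⟩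
  rw [Nat.card_prod, Nat.card_fin, ← Nat.card_eq_fintype_card]
  have hlayers : (C.card + 1) * (n + 3) ≤ Nat.card V * (n + 3) :=
    Nat.mul_le_mul_right _ (by omega)
  rw [add_one_mul] at hlayers
  omega
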